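/- In a linearly closed Cartesian reverse differential category, the gradient is the transpose of the Jacobian: ∇(f) = τ ∘ J(f) for every map f : A → B. -/

import Mathlib

universe u v

/-- A Cartesian differential category, presented as an explicit algebraic structure:
a Cartesian left additive category equipped with a differential combinator `D`
satisfying the axioms [CD.1]–[CD.7]. -/
structure CDC where
  Obj : Type u
  Hom : Obj → Obj → Type v
  id : (A : Obj) → Hom A A
  comp : {A B C : Obj} → Hom B C → Hom A B → Hom A C
  comp_id : ∀ {A B : Obj} (f : Hom A B), comp f (id A) = f
  id_comp : ∀ {A B : Obj} (f : Hom A B), comp (id B) f = f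
  assoc : ∀ {A B C D : Obj} (h : Hom C D) (g : Hom B C) (f : Hom A B),
    comp (comp h g) f = comp h (comp g f)
  /- left additive structure -/
  add : {A B : Obj} → Hom A B → Hom A B → Hom A B
  zero : {A B : Obj} → Hom A B
  add_assoc : ∀ {A B : Obj} (f g h : Hom A B), add (add f g) h = add f (add g h)
  add_comm : ∀ {A B : Obj} (f g : Hom A B), add f g = add g f
  add_zero : ∀ {A B : Obj} (f : Hom A B), add f zero = f
  add_comp : ∀ {A B C : Obj} (f g : Hom B C) (a : Hom A B),
    comp (add f g) a = add (comp f a) (comp g a)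
  zero_comp : ∀ {A B C : Obj} (a : Hom A B), comp (zero : Hom B C) a = (zero : Hom A C)
  /- finite products -/
  prod : Obj → Obj → Obj
  p0 : {A B : Obj} → Hom (prod A B) A
  p1 : {A B : Obj} → Hom (prod A B) B
  pair : {X A B : Obj} → Hom X A → Hom X B → Hom X (prod A B)
  p0_pair : ∀ {X A B : Obj} (f : Hom X A) (g : Hom X B), comp p0 (pair f g) = f
  p1_pair : ∀ {X A B : Obj} (f : Hom X A) (g : Hom X B), comp p1 (pair f g) = g
  pair_unique : ∀ {X A B : Obj} (h : Hom X (prod A B)) (f : Hom X A) (g : Hom X B),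
    comp p0 h = f → comp p1 h = g → h = pair f g
  term : Obj
  bang : (A : Obj) → Hom A term
  bang_unique : ∀ {A : Obj} (f : Hom A term), f = bang A
  /- projections are additive -/
  p0_add : ∀ {X A B : Obj} (a b : Hom X (prod A B)),
    comp p0 (add a b) = add (comp p0 a) (comp p0 b)
  p1_add : ∀ {X A B : Obj} (a b : Hom X (prod A B)),
    comp p1 (add a b) = add (comp p1 a) (comp p1 b)
  p0_zero : ∀ {X A B : Obj}, comp (p0 : Hom (prod A B) A) (zero : Hom X (prod A B)) = zero
  p1_zero : ∀ {X A B : Obj}, comp (p1 : Hom (prod A B) B) (zero : Hom X (prod A B)) = zero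
  /- the differential combinator -/
  D : {A B : Obj} → Hom A B → Hom (prod A A) B
  CD1a : ∀ {A B : Obj} (f g : Hom A B), D (add f g) = add (D f) (D g)
  CD1b : ∀ {A B : Obj}, D (zero : Hom A B) = zero
  CD2a : ∀ {X A B : Obj} (f : Hom A B) (a b c : Hom X A),
    comp (D f) (pair a (add b c)) = add (comp (D f) (pair a b)) (comp (D f) (pair a c))
  CD2b : ∀ {X A B : Obj} (f : Hom A B) (a : Hom X A),
    comp (D f) (pair a zero) = zero
  CD3a : ∀ {A : Obj}, D (id A) = (p1 : Hom (prod A A) A)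
  CD3b : ∀ {A B : Obj}, D (p0 : Hom (prod A B) A) = comp p0 p1
  CD3c : ∀ {A B : Obj}, D (p1 : Hom (prod A B) B) = comp p1 p1
  CD4 : ∀ {A B C : Obj} (f : Hom A B) (g : Hom A C), D (pair f g) = pair (D f) (D g)
  CD5 : ∀ {A B C : Obj} (g : Hom B C) (f : Hom A B),
    D (comp g f) = comp (D g) (pair (comp f p0) (D f))
  CD6 : ∀ {X A B : Obj} (f : Hom A B) (a b c : Hom X A),
    comp (D (D f)) (pair (pair a b) (pair zero c)) = comp (D f) (pair a c)
  CD7 : ∀ {X A B : Obj} (f : Hom A B) (a b c : Hom X A),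
    comp (D (D f)) (pair (pair a b) (pair c zero))
      = comp (D (D f)) (pair (pair a c) (pair b zero))

namespace CDC

variable (C : CDC)

/-- A map is linear if `D[f] = f ∘ π₁`. -/
def Linear {A B : C.Obj} (f : C.Hom A B) : Prop := C.D f = C.comp f C.p1

/-- A map `f : A × B → C` is linear in its second argument. -/
def LinSecond {A B Z : C.Obj} (f : C.Hom (C.prod A B) Z) : Prop :=
  ∀ {X : C.Obj} (a : C.Hom X A) (b d : C.Hom X B),
    C.comp (C.D f) (C.pair (C.pair a b) (C.pair C.zero d)) = C.comp f (C.pair a d)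

/-- A map `f : A × B → C` is linear in its first argument. -/
def LinFirst {A B Z : C.Obj} (f : C.Hom (C.prod A B) Z) : Prop :=
  ∀ {X : C.Obj} (a : C.Hom X A) (b : C.Hom X B) (c : C.Hom X A),
    C.comp (C.D f) (C.pair (C.pair a b) (C.pair c C.zero)) = C.comp f (C.pair c b)

/-- A map `f : A × B → C` is bilinear. -/
def Bilinear {A B Z : C.Obj} (f : C.Hom (C.prod A B) Z) : Prop :=
  ∀ {X : C.Obj} (a : C.Hom X A) (b : C.Hom X B) (c : C.Hom X A) (d : C.Hom X B),
    C.comp (C.D f) (C.pair (C.pair a b) (C.pair c d))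
      = C.add (C.comp f (C.pair a d)) (C.comp f (C.pair c b))

end CDC

/-- A linearly closed Cartesian differential category: a Cartesian differential
category with internal linear homs `L(A,B)`, bilinear evaluation maps
`ε_ℓ : L(A,B) × A → B`, and unique linear curries of maps linear in their
second argument. (`lcurry` is a total operation; its defining properties are only
required on maps linear in their second argument.) -/
structure LCCDC extends CDC where
  L : Obj → Obj → Obj
  ev : {A B : Obj} → Hom (prod (L A B) A) B
  ev_bilinear : ∀ {A B : Obj}, toCDC.Bilinear (ev (A := A) (B := B))
  lcurry : {A B Z : Obj} → Hom (prod A B) Z → Hom A (L B Z)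
  lcurry_eval : ∀ {A B Z : Obj} (f : Hom (prod A B) Z), toCDC.LinSecond f →
    comp ev (pair (comp (lcurry f) p0) p1) = f
  lcurry_unique : ∀ {A B Z : Obj} (f : Hom (prod A B) Z), toCDC.LinSecond f →
    ∀ (g : Hom A (L B Z)), comp ev (pair (comp g p0) p1) = f → g = lcurry f

namespace LCCDC

variable (C : LCCDC)

/-- The Jacobian of `f : A → B` is the linear curry of its derivative. -/
def J {A B : C.Obj} (f : C.Hom A B) : C.Hom A (C.L A B) := C.lcurry (C.D f)

/-- The internal composition map `⊙ : L(B,C) × L(A,B) → L(A,C)`, the linear curry of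
`ε_ℓ ∘ (1 × ε_ℓ)` (suitably reassociated). -/
def odot (A B Z : C.Obj) : C.Hom (C.prod (C.L B Z) (C.L A B)) (C.L A Z) :=
  C.lcurry (C.comp C.ev (C.pair (C.comp C.p0 C.p0)
    (C.comp C.ev (C.pair (C.comp C.p1 C.p0) C.p1))))

/-- For a linear map `f : A → B`, the point `p_f : ⊤ → L(A,B)`, the linear curry of
`f ∘ π₁ : ⊤ × A → B`. -/
def pt {A B : C.Obj} (f : C.Hom A B) : C.Hom C.term (C.L A B) :=
  C.lcurry (C.comp f (C.p1 (A := C.term)))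

end LCCDC

/-- A linearly closed Cartesian reverse differential category: a linearly closed
Cartesian differential category whose differential structure is induced by a reverse
differential combinator `R`, equivalently equipped with a contextual linear dagger
`†[A]` sending a map `A × B → C` linear in its second argument to a map `A × C → B`
linear in its second argument, with `R[f] = D[f]^{†[A]}` and the dagger preserving
modification of the context. -/
structure LCRDC extends LCCDC where
  R : {A B : Obj} → Hom A B → Hom (prod A B) A
  dagger : {A B Z : Obj} → Hom (prod A B) Z → Hom (prod A Z) B
  dagger_linSecond : ∀ {A B Z : Obj} (f : Hom (prod A B) Z),
    toCDC.LinSecond f → toCDC.LinSecond (dagger f)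
  R_eq_dagger_D : ∀ {A B : Obj} (f : Hom A B), R f = dagger (D f)
  dagger_context : ∀ {A A' B Z : Obj} (f : Hom (prod A B) Z) (g : Hom A' A),
    toCDC.LinSecond f →
    dagger (comp f (pair (comp g p0) p1)) = comp (dagger f) (pair (comp g p0) p1)

namespace LCRDC

variable (C : LCRDC)

/-- The linear transpose `τ : L(A,B) → L(B,A)`, the linear curry of the contextual
dagger of the evaluation map. -/
def tau (A B : C.Obj) : C.Hom (C.L A B) (C.L B A) :=
  C.lcurry (C.dagger (C.ev (A := A) (B := B)))

/-- The gradient of `f : A → B` is the linear curry of its reverse derivative. -/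
def grad {A B : C.Obj} (f : C.Hom A B) : C.Hom A (C.L B A) := C.lcurry (C.R f)

end LCRDC

namespace CDC

variable (C : CDC)

lemma zero_add' {A B : C.Obj} (f : C.Hom A B) : C.add C.zero f = f := by
  rw [C.add_comm]; exact C.add_zero f

lemma pair_comp {X Y A B : C.Obj} (f : C.Hom Y A) (g : C.Hom Y B) (h : C.Hom X Y) :
    C.comp (C.pair f g) h = C.pair (C.comp f h) (C.comp g h) := by
  apply C.pair_unique
  · rw [← C.assoc, C.p0_pair]
  · rw [← C.assoc, C.p1_pair]

lemma pair_zero {X A B : C.Obj} : (C.pair C.zero C.zero : C.Hom X (C.prod A B)) = C.zero := by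
  symm; exact C.pair_unique _ _ _ C.p0_zero C.p1_zero

lemma zero_linSecond {A B Z : C.Obj} : C.LinSecond (C.zero : C.Hom (C.prod A B) Z) := by
  intro X a b d
  rw [C.CD1b, C.zero_comp, C.zero_comp]

lemma D_linSecond {A B : C.Obj} (f : C.Hom A B) : C.LinSecond (C.D f) := by
  intro X a b d; exact C.CD6 f a b d

end CDC

namespace LCCDC

variable (C : LCCDC)

lemma ev_zero_left {X A B : C.Obj} (b : C.Hom X A) :
    C.comp C.ev (C.pair (C.zero : C.Hom X (C.L A B)) b) = C.zero := by
  set m := C.lcurry (C.zero : C.Hom (C.prod X A) B) with hm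
  have h1 : C.comp C.ev (C.pair (C.comp m C.p0) C.p1) = C.zero :=
    C.lcurry_eval _ (C.toCDC.zero_linSecond)
  have h2 : C.comp C.ev (C.pair m C.zero) = C.zero := by
    have h := congrArg (fun g => C.comp g (C.pair (C.id X) (C.zero : C.Hom X A))) h1
    rw [C.assoc, C.toCDC.pair_comp, C.assoc, C.p0_pair, C.p1_pair, C.comp_id,
      C.zero_comp] at h
    exact h
  have h4 := C.ev_bilinear m b (C.zero : C.Hom X (C.L A B)) (C.zero : C.Hom X A)
  rw [C.toCDC.pair_zero, C.CD2b, h2] at h4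
  rw [← C.toCDC.zero_add' (C.comp C.ev (C.pair C.zero b)), ← h4]

lemma ev_linSecond {A B : C.Obj} : C.toCDC.LinSecond (C.ev (A := A) (B := B)) := by
  intro X a b d
  have hb := C.ev_bilinear a b (C.zero : C.Hom X (C.L A B)) d
  rw [hb, C.ev_zero_left b, C.add_zero]

end LCCDC

/-- in a linearly closed Cartesian reverse differential category, the
gradient is the transpose of the Jacobian: `∇(f) = τ ∘ J(f)`. -/
theorem grad_eq_tau_comp_jacobian (C : LCRDC) {A B : C.Obj} (f : C.Hom A B) :
    C.grad f = C.comp (C.tau A B) (C.J f) := by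
  have hDf : C.toCDC.LinSecond (C.D f) := C.toCDC.D_linSecond f
  have hev : C.toCDC.LinSecond (C.ev (A := A) (B := B)) := C.toLCCDC.ev_linSecond
  have hJ : C.comp C.ev (C.pair (C.comp (C.J f) C.p0) C.p1) = C.D f :=
    C.lcurry_eval _ hDf
  have htau : C.comp C.ev (C.pair (C.comp (C.tau A B) C.p0) C.p1) = C.dagger C.ev :=
    C.lcurry_eval _ (C.dagger_linSecond _ hev)
  have key : C.comp C.ev (C.pair (C.comp (C.comp (C.tau A B) (C.J f)) C.p0) C.p1)
      = C.R f := by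
    have hp : C.pair (C.comp (C.comp (C.tau A B) (C.J f)) (C.p0 (A := A) (B := B)))
          (C.p1 (A := A) (B := B))
        = C.comp (C.pair (C.comp (C.tau A B) (C.p0 (A := C.L A B) (B := B)))
              (C.p1 (A := C.L A B) (B := B)))
            (C.pair (C.comp (C.J f) (C.p0 (A := A) (B := B))) (C.p1 (A := A) (B := B))) := by
      rw [C.toCDC.pair_comp, C.assoc, C.assoc, C.p0_pair, C.p1_pair]
    rw [hp, ← C.assoc, htau, ← C.dagger_context _ _ hev, hJ, ← C.R_eq_dagger_D]
  have hRf : C.toCDC.LinSecond (C.R f) := by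
    rw [C.R_eq_dagger_D]; exact C.dagger_linSecond _ hDf
  exact (C.lcurry_unique (C.R f) hRf _ key).symm
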